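/- Let P be a finite set of points in ℝ² with |P| ≥ 3. Then there exist a 3-element subset S ⊆ P that minimizes w(S) over all 3-element subsets of P, and a point c ∈ ℝ² (namely the coordinatewise median of the three points of S, the center of the smallest Steiner star of S), such that ‖s−c‖₁ ≤ ‖p−c‖₁ for every s ∈ S and every p ∈ P∖S; i.e., some optimal 3-subset consists of three points of P nearest to c in the L1 metric. -/

import Mathlib

open Finset

/-- The L1 (Manhattan) distance between two points of the plane. -/
noncomputable def dist1 (p q : Fin 2 → ℝ) : ℝ := ∑ i, |p i - q i|

/-- The sum of L1 distances over all unordered pairs of distinct points of `S`. -/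
noncomputable def w (S : Finset (Fin 2 → ℝ)) : ℝ := (∑ p ∈ S, ∑ q ∈ S, dist1 p q) / 2

/-- The median of three real numbers. -/
noncomputable def med3 (a b c : ℝ) : ℝ := max (min a b) (max (min b c) (min a c))

/-!
For three points, `w` is exactly twice the length of the Steiner star centered at their
coordinatewise median (on each axis, both `|a - b| + |a - c| + |b - c|` and twice the distances to
the median equal twice the spread of `a, b, c`), while for any center the triangle inequality
bounds `w` of a triple by twice its star length. Hence if a minimizing triple `S` had a point `s`
farther from its median `c` than some `p ∉ S`, exchanging `s` for `p` would give a triple `T`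
with `w T ≤ 2 * starLength T c < 2 * starLength S c = w S`.
-/

theorem abs_sub_add_abs_sub_add_abs_sub_eq_two_mul_med3 (a b c : ℝ) :
    |a - b| + |a - c| + |b - c| =
      2 * (|a - med3 a b c| + |b - med3 a b c| + |c - med3 a b c|) := by
  unfold med3
  rcases le_total a b with hab | hab <;> rcases le_total b c with hbc | hbc <;>
    rcases le_total a c with hac | hac <;>
    simp [hab, hbc, hac, abs_of_nonneg, abs_of_nonpos] <;> linarith

theorem dist1_self (p : Fin 2 → ℝ) : dist1 p p = 0 := by
  simp [dist1]

theorem dist1_comm (p q : Fin 2 → ℝ) : dist1 p q = dist1 q p := by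
  simp [dist1, abs_sub_comm]

theorem dist1_triangle (p q r : Fin 2 → ℝ) : dist1 p r ≤ dist1 p q + dist1 q r := by
  rw [dist1, dist1, dist1, ← sum_add_distrib]
  exact sum_le_sum fun i _ => abs_sub_le (p i) (q i) (r i)

noncomputable def starLength (S : Finset (Fin 2 → ℝ)) (c : Fin 2 → ℝ) : ℝ :=
  ∑ s ∈ S, dist1 s c

noncomputable def median3 (a b c : Fin 2 → ℝ) : Fin 2 → ℝ := fun i => med3 (a i) (b i) (c i)

theorem starLength_insert_erase {S : Finset (Fin 2 → ℝ)} {s p : Fin 2 → ℝ} (hs : s ∈ S)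
    (hp : p ∉ S) (c : Fin 2 → ℝ) :
    starLength (insert p (S.erase s)) c = starLength S c - dist1 s c + dist1 p c := by
  rw [starLength, sum_insert (fun h => hp (mem_of_mem_erase h)), sum_erase_eq_sub hs,
    starLength]
  ring

theorem w_le_mul_starLength (S : Finset (Fin 2 → ℝ)) (c : Fin 2 → ℝ) :
    w S ≤ (#S - 1 : ℝ) * starLength S c := by
  -- The summands are nonnegative by the triangle inequality; the diagonal one is `2 * dist1 p c`.
  have hdiag : ∀ p ∈ S, 2 * dist1 p c ≤ ∑ q ∈ S, (dist1 p c + dist1 q c - dist1 p q) := by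
    intro p hp
    have := single_le_sum (f := fun q => dist1 p c + dist1 q c - dist1 p q)
      (fun q _ => by linarith [dist1_triangle p c q, dist1_comm c q]) hp
    simpa [dist1_self, two_mul] using this
  have := sum_le_sum hdiag
  simp only [sum_sub_distrib, sum_add_distrib, sum_const, nsmul_eq_mul, ← mul_sum] at this
  rw [w, starLength]
  linarith

theorem w_triple {a b c : Fin 2 → ℝ} (hab : a ≠ b) (hac : a ≠ c) (hbc : b ≠ c) :
    w {a, b, c} = dist1 a b + dist1 a c + dist1 b c := by
  simp only [w, sum_insert, mem_insert, mem_singleton, hab, hac, hbc, not_false_eq_true,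
    or_self, sum_singleton, dist1_self, dist1_comm b a, dist1_comm c a, dist1_comm c b]
  ring

theorem w_triple_eq_two_mul_starLength_median3 {a b c : Fin 2 → ℝ} (hab : a ≠ b) (hac : a ≠ c)
    (hbc : b ≠ c) :
    w {a, b, c} = 2 * starLength {a, b, c} (median3 a b c) := by
  simp only [w_triple hab hac hbc, starLength, sum_insert, mem_insert, mem_singleton, hab, hac,
    hbc, not_false_eq_true, or_self, sum_singleton, dist1, median3, ← sum_add_distrib, mul_sum]
  exact sum_congr rfl fun i _ => by rw [abs_sub_add_abs_sub_add_abs_sub_eq_two_mul_med3]; ring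

theorem dist1_le_dist1_of_w_minimal {P : Finset (Fin 2 → ℝ)} {S : Finset (Fin 2 → ℝ)}
    (hS : ∀ T ⊆ P, #T = 3 → w S ≤ w T) (hSP : S ⊆ P) (hS3 : #S = 3) {c : Fin 2 → ℝ}
    (hc : w S = 2 * starLength S c) {s p : Fin 2 → ℝ} (hs : s ∈ S) (hp : p ∈ P \ S) :
    dist1 s c ≤ dist1 p c := by
  obtain ⟨hpP, hpS⟩ := mem_sdiff.mp hp
  set T := insert p (S.erase s)
  have hTP : T ⊆ P := insert_subset hpP ((erase_subset s S).trans hSP)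
  have hT3 : #T = 3 := by
    rw [card_insert_of_notMem (fun h => hpS (mem_of_mem_erase h)), card_erase_of_mem hs, hS3]
  by_contra! hlt
  have hwT : w T < w S := calc
    w T ≤ 2 * starLength T c := by
      simpa [hT3, show (3 : ℝ) - 1 = 2 by norm_num] using w_le_mul_starLength T c
    _ = 2 * (starLength S c - dist1 s c + dist1 p c) := by rw [starLength_insert_erase hs hpS]
    _ < 2 * starLength S c := by linarith
    _ = w S := hc.symm
  exact hwT.not_ge (hS T hTP hT3)

/-- Some optimal 3-subset of `P` (minimizing the total pairwise L1 distance) consists of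
three points of `P` that are nearest (in L1) to the coordinatewise median `c` of the three
points — the center of the smallest Steiner star of the subset. -/
theorem optimal_triple_is_nearest_to_median
    (P : Finset (Fin 2 → ℝ)) (hP : 3 ≤ P.card) :
    ∃ S ⊆ P, S.card = 3 ∧
      (∀ T ⊆ P, T.card = 3 → w S ≤ w T) ∧
      ∃ s₀ s₁ s₂ : Fin 2 → ℝ, S = {s₀, s₁, s₂} ∧
        ∀ s ∈ S, ∀ p ∈ P \ S,
          dist1 s (fun i => med3 (s₀ i) (s₁ i) (s₂ i)) ≤
          dist1 p (fun i => med3 (s₀ i) (s₁ i) (s₂ i)) := by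
  obtain ⟨S, hS, hmin⟩ := exists_min_image (P.powersetCard 3) w (powersetCard_nonempty.mpr hP)
  obtain ⟨hSP, hS3⟩ := mem_powersetCard.mp hS
  obtain ⟨a, b, c, hab, hac, hbc, rfl⟩ := card_eq_three.mp hS3
  have hopt : ∀ T ⊆ P, #T = 3 → w {a, b, c} ≤ w T :=
    fun T hTP hT3 => hmin T (mem_powersetCard.mpr ⟨hTP, hT3⟩)
  exact ⟨_, hSP, hS3, hopt, a, b, c, rfl, fun s hs p hp => dist1_le_dist1_of_w_minimal hopt hSP hS3
    (w_triple_eq_two_mul_starLength_median3 hab hac hbc) hs hp⟩
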